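/- Let (Σ,P) be a Kelvin–Planck theory for which all Clausius–Duhem temperature scales on Σ are positive multiples of some fixed one. Then the set of all linear combinations of Carnot elements of (Σ,P) is dense in the set of all reversible cyclic elements of (Σ,P). -/

import Mathlib

open Set

noncomputable section

/-- Signed regular Borel measures on `X`, modeled via the Riesz representation
theorem as the weak-star dual of `C(X, ℝ)`. -/
abbrev Meas (X : Type*) [TopologicalSpace X] := WeakDual ℝ C(X, ℝ)

/-- The ambient space containing `V(X) = M°(X) ⊕ M(X)`; membership in the
subspace `M°(X)` of the first component is expressed by `p.1 1 = 0`. -/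
abbrev VSp (X : Type*) [TopologicalSpace X] := Meas X × Meas X

/-- The cone of nonnegative measures. -/
def PosMeas (X : Type*) [TopologicalSpace X] : Set (Meas X) :=
  {μ | ∀ f : C(X, ℝ), (∀ x, 0 ≤ f x) → 0 ≤ μ f}

variable {X : Type*} [TopologicalSpace X]

/-- The Dirac measure at a point, i.e. the evaluation functional. -/
def dirac (x : X) : Meas X :=
  (⟨⟨⟨fun f => f x, fun _ _ => rfl⟩, fun _ _ => rfl⟩,
    continuous_eval_const x⟩ : C(X, ℝ) →L[ℝ] ℝ)

/-- The set of nonnegative multiples of members of `P`. -/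
def coneOf (P : Set (VSp X)) : Set (VSp X) :=
  {x | ∃ c : ℝ, 0 ≤ c ∧ ∃ p ∈ P, x = c • p}

/-- `\hat P`, the weak-star closure of the cone generated by `P`. -/
def hatP (P : Set (VSp X)) : Set (VSp X) :=
  closure (coneOf P)

/-- A thermodynamical theory: processes have change of condition with total mass
zero (i.e. `P ⊆ V(X)`), and `\hat P` is convex. -/
def IsThermoTheory (P : Set (VSp X)) : Prop :=
  (∀ p ∈ P, p.1 (1 : C(X, ℝ)) = 0) ∧ Convex ℝ (hatP P)

/-- A Kelvin–Planck theory: a thermodynamical theory with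
`\hat P ∩ ({0} × M₊(X)) = {(0,0)}`. -/
def IsKelvinPlanck (P : Set (VSp X)) : Prop :=
  IsThermoTheory P ∧ hatP P ∩ (({0} : Set (Meas X)) ×ˢ PosMeas X) = {(0, 0)}

/-- A Clausius–Duhem pair `(η, T)` for the theory `P`: `η` and `T` are continuous,
`T` is strictly positive, and for every continuous `β` equal pointwise to `1/T`
(such a `β` exists, and is unique, by positivity of `T`), the Clausius–Duhem
inequality `∫ η d(Δm) ≥ ∫ (1/T) dq` holds for every process in `P`. -/
def IsCDPair (P : Set (VSp X)) (η T : C(X, ℝ)) : Prop :=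
  (∀ x, 0 < T x) ∧
    ∀ β : C(X, ℝ), (∀ x, β x = (T x)⁻¹) → ∀ p ∈ P, p.2 β ≤ p.1 η

/-- A Clausius–Duhem temperature scale. -/
def IsCDTemp (P : Set (VSp X)) (T : C(X, ℝ)) : Prop :=
  ∃ η : C(X, ℝ), IsCDPair P η T

/-- Two states are of the same hotness: both `(0, δ_a − δ_b)` and `(0, δ_b − δ_a)`
belong to `\hat P`. -/
def SameHotness (P : Set (VSp X)) (a b : X) : Prop :=
  ((0 : Meas X), dirac a - dirac b) ∈ hatP P ∧
    ((0 : Meas X), dirac b - dirac a) ∈ hatP P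

/-- The hotness level of a state. -/
def hotnessLevel (P : Set (VSp X)) (a : X) : Set X :=
  {b | SameHotness P a b}

/-- A subset of the state space that is a hotness level. -/
def IsHotnessLevel (P : Set (VSp X)) (h : Set X) : Prop :=
  ∃ a : X, h = hotnessLevel P a

/-- The (signed) measure `μ` is supported in the set `A`: `μ` annihilates every
continuous function vanishing on `A`. -/
def SuppIn (μ : Meas X) (A : Set X) : Prop :=
  ∀ f : C(X, ℝ), (∀ x ∈ A, f x = 0) → μ f = 0

/-- `\hat Q` contains a passive heat transfer from hotness level `h` to `h'`:
an element `(0, μ − μ')` of `\hat Q` with `μ, μ'` nonnegative, `supp μ ⊆ h`,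
`supp μ' ⊆ h'` and `μ(h) = μ'(h') > 0` (the common value being the total mass). -/
def IsPassiveHT (Q : Set (VSp X)) (h h' : Set X) : Prop :=
  ∃ μ μ' : Meas X, μ ∈ PosMeas X ∧ μ' ∈ PosMeas X ∧ SuppIn μ h ∧ SuppIn μ' h' ∧
    μ (1 : C(X, ℝ)) = μ' (1 : C(X, ℝ)) ∧ 0 < μ (1 : C(X, ℝ)) ∧
    ((0 : Meas X), μ - μ') ∈ hatP Q

/-- Hotness level `h'` is hotter than `h`: the levels are distinct and every
thermodynamical theory whose closed process cone contains `P` together with a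
passive heat transfer from `h` to `h'` fails to be a Kelvin–Planck theory. -/
def Hotter (P : Set (VSp X)) (h' h : Set X) : Prop :=
  h' ≠ h ∧ ∀ Pd : Set (VSp X), IsThermoTheory Pd → P ⊆ hatP Pd →
    IsPassiveHT Pd h h' → ¬ IsKelvinPlanck Pd

/-- State `a` is hotter than state `b`. -/
def HotterState (P : Set (VSp X)) (a b : X) : Prop :=
  Hotter P (hotnessLevel P a) (hotnessLevel P b)

/-- A Carnot element of the theory `P` operating between hotness levels `h'` and
`h`: a reversible cyclic element `(0, μ' − μ)` with `μ', μ` nonzero nonnegative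
measures supported in `h'`, `h` respectively. -/
def IsCarnotBetween (P : Set (VSp X)) (h' h : Set X) (p : VSp X) : Prop :=
  p ∈ hatP P ∧ -p ∈ hatP P ∧
    ∃ μ' μ : Meas X, μ' ∈ PosMeas X ∧ μ ∈ PosMeas X ∧ μ' ≠ 0 ∧ μ ≠ 0 ∧
      SuppIn μ' h' ∧ SuppIn μ h ∧ p = ((0 : Meas X), μ' - μ)

end

/-!
A reversible cyclic element outside the closed span of the Carnot elements would be separated
from it by a weak-star continuous functional, that is, by a pair `(g, γ)` of continuous functions.
Uniqueness of the temperature scale forces `γ ∝ 1/T` whenever `(g, γ)` satisfies the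
Clausius–Duhem inequality on `P`: if `(η, T)` is a Clausius–Duhem pair, then so is
`(η + t g, 1 / (1/T + t γ))` for small `t > 0`. By separation this puts every `(0, q)` with
`∫ (1/T) dq = 0` into `\hat P`; in particular `(0, T(a) δ_a − T(b) δ_b)` is a Carnot element
for all states `a, b`. A functional vanishing on these has `T γ` constant, so again `γ ∝ 1/T`,
and it kills every reversible cyclic element since those satisfy `∫ (1/T) dq = 0`.
-/

section Separation

variable {E : Type*} [TopologicalSpace E] [AddCommGroup E] [IsTopologicalAddGroup E]
  [Module ℝ E] [ContinuousSMul ℝ E] [LocallyConvexSpace ℝ E]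

theorem Submodule.exists_dual_eq_zero_of_notMem_closure (W : Submodule ℝ E) {x₀ : E}
    (hx₀ : x₀ ∉ closure (W : Set E)) :
    ∃ f : StrongDual ℝ E, (∀ w ∈ W, f w = 0) ∧ f x₀ ≠ 0 := by
  obtain ⟨f, hfW, hfx₀⟩ := ProperCone.hyperplane_separation_point
    (W.restrictScalars {r : ℝ // 0 ≤ r}).closure hx₀
  refine ⟨f, fun w hw => le_antisymm ?_ (hfW w (subset_closure hw)), hfx₀.ne⟩
  simpa using hfW (-w) (subset_closure (W.neg_mem hw))

end Separation

namespace WeakDual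

variable {𝕜 E : Type*} [NormedField 𝕜] [AddCommGroup E] [Module 𝕜 E] [TopologicalSpace E]

@[simp] theorem zero_apply (x : E) : (0 : WeakDual 𝕜 E) x = 0 := rfl

@[simp] theorem smul_apply (c : 𝕜) (μ : WeakDual 𝕜 E) (x : E) : (c • μ) x = c * μ x := rfl

@[simp] theorem neg_apply (μ : WeakDual 𝕜 E) (x : E) : (-μ) x = -μ x := rfl

@[simp] theorem sub_apply (μ ν : WeakDual 𝕜 E) (x : E) : (μ - ν) x = μ x - ν x := rfl

instance instLocallyConvexSpace {E : Type*} [AddCommGroup E] [Module ℝ E] [TopologicalSpace E] :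
    LocallyConvexSpace ℝ (WeakDual ℝ E) :=
  WeakBilin.locallyConvexSpace

theorem exists_eval_eq_prod {𝕜 E F : Type*} [NontriviallyNormedField 𝕜]
    [AddCommGroup E] [Module 𝕜 E] [TopologicalSpace E]
    [AddCommGroup F] [Module 𝕜 F] [TopologicalSpace F]
    (φ : StrongDual 𝕜 (WeakDual 𝕜 E × WeakDual 𝕜 F)) :
    ∃ (e : E) (f : F), ∀ p, φ p = p.1 e + p.2 f := by
  obtain ⟨e, he⟩ := LinearMap.dualEmbedding_surjective (topDualPairing 𝕜 E)
    (φ.comp (.inl 𝕜 _ _))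
  obtain ⟨f, hf⟩ := LinearMap.dualEmbedding_surjective (topDualPairing 𝕜 F)
    (φ.comp (.inr 𝕜 _ _))
  refine ⟨e, f, fun p => ?_⟩
  calc φ p = φ (p.1, 0) + φ (0, p.2) := by rw [← map_add, Prod.mk_add_mk, add_zero, zero_add]
    _ = p.1 e + p.2 f := congr_arg₂ (· + ·) (DFunLike.congr_fun he p.1).symm
        (DFunLike.congr_fun hf p.2).symm

end WeakDual

noncomputable section Thermodynamics

variable {X : Type*} [TopologicalSpace X] {P : Set (VSp X)}

def recip (f : C(X, ℝ)) (hf : ∀ x, f x ≠ 0) : C(X, ℝ) :=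
  ⟨fun x => (f x)⁻¹, f.continuous.inv₀ hf⟩

@[simp]
theorem recip_apply (f : C(X, ℝ)) (hf : ∀ x, f x ≠ 0) (x : X) : recip f hf x = (f x)⁻¹ := rfl

theorem exists_pos_forall_pos_add_mul [CompactSpace X] {f : C(X, ℝ)} (hf : ∀ x, 0 < f x)
    (g : C(X, ℝ)) : ∃ t > 0, ∀ x, 0 < f x + t * g x := by
  cases isEmpty_or_nonempty X
  · exact ⟨1, one_pos, fun x => isEmptyElim x⟩
  obtain ⟨x₀, -, hx₀⟩ := isCompact_univ.exists_isMinOn univ_nonempty f.continuous.continuousOn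
  have ht : 0 < f x₀ / (‖g‖ + 1) := div_pos (hf x₀) (by positivity)
  refine ⟨_, ht, fun x => ?_⟩
  have hgx : -‖g‖ ≤ g x := neg_le_of_abs_le (g.norm_coe_le_norm x)
  have hmin : f x₀ ≤ f x := hx₀ (mem_univ x)
  have hfx₀ : f x₀ / (‖g‖ + 1) * (‖g‖ + 1) = f x₀ := div_mul_cancel₀ _ (by positivity)
  nlinarith

theorem eq_smul_recip_of_forall_mul_eq {T γ : C(X, ℝ)} (hT : ∀ x, T x ≠ 0)
    (h : ∀ a b, T a * γ a = T b * γ b) : ∃ c : ℝ, γ = c • recip T hT := by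
  cases isEmpty_or_nonempty X
  · exact ⟨0, ContinuousMap.ext fun x => isEmptyElim x⟩
  obtain ⟨a⟩ := ‹Nonempty X›
  refine ⟨T a * γ a, ContinuousMap.ext fun x => ?_⟩
  rw [ContinuousMap.smul_apply, recip_apply, smul_eq_mul, ← h x a, mul_comm (T x),
    mul_inv_cancel_right₀ (hT x)]

@[simp]
theorem dirac_apply (x : X) (f : C(X, ℝ)) : dirac x f = f x := rfl

theorem smul_dirac_mem_posMeas {c : ℝ} (hc : 0 ≤ c) (x : X) : c • dirac x ∈ PosMeas X :=
  fun _ hf => mul_nonneg hc (hf x)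

theorem smul_dirac_ne_zero {c : ℝ} (hc : c ≠ 0) (x : X) : c • dirac x ≠ 0 := fun h => by
  simpa [hc] using congr($h (1 : C(X, ℝ)))

theorem suppIn_smul_dirac (c : ℝ) {x : X} {A : Set X} (hx : x ∈ A) : SuppIn (c • dirac x) A :=
  fun _ hf => by simp [hf x hx]

theorem smul_mem_hatP {c : ℝ} (hc : 0 ≤ c) {p : VSp X} (hp : p ∈ hatP P) : c • p ∈ hatP P := by
  refine map_mem_closure (continuous_const_smul c) hp ?_
  rintro _ ⟨c', hc', q, hq, rfl⟩
  exact ⟨c * c', mul_nonneg hc hc', q, hq, smul_smul c c' q⟩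

theorem subset_hatP : P ⊆ hatP P := fun p hp =>
  subset_closure ⟨1, zero_le_one, p, hp, (one_smul ℝ p).symm⟩

theorem snd_le_fst_of_mem_hatP {g γ : C(X, ℝ)} (h : ∀ p ∈ P, p.2 γ ≤ p.1 g) :
    ∀ p ∈ hatP P, p.2 γ ≤ p.1 g := by
  refine fun p hp => closure_minimal ?_
    (isClosed_le ((WeakDual.eval_continuous γ).comp continuous_snd)
      ((WeakDual.eval_continuous g).comp continuous_fst)) hp
  rintro _ ⟨c, hc, q, hq, rfl⟩
  simpa using mul_le_mul_of_nonneg_left (h q hq) hc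

theorem IsThermoTheory.add_mem_hatP (hP : IsThermoTheory P) {p q : VSp X} (hp : p ∈ hatP P)
    (hq : q ∈ hatP P) : p + q ∈ hatP P := by
  have hmid := hP.2 hp hq (by norm_num : (0 : ℝ) ≤ 1 / 2) (by norm_num : (0 : ℝ) ≤ 1 / 2)
    (by norm_num)
  convert smul_mem_hatP zero_le_two hmid using 1
  rw [smul_add, smul_smul, smul_smul]
  norm_num

theorem IsKelvinPlanck.zero_mem_hatP (hP : IsKelvinPlanck P) : (0 : VSp X) ∈ hatP P :=
  (hP.2.symm.subset rfl).1

def IsKelvinPlanck.hatPCone (hP : IsKelvinPlanck P) : ProperCone ℝ (VSp X) where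
  carrier := hatP P
  add_mem' := hP.1.add_mem_hatP
  zero_mem' := hP.zero_mem_hatP
  smul_mem' c _ hp := smul_mem_hatP c.2 hp
  isClosed' := isClosed_closure

theorem IsKelvinPlanck.mem_hotnessLevel_self (hP : IsKelvinPlanck P) (a : X) :
    a ∈ hotnessLevel P a := by
  show SameHotness P a a
  simp only [SameHotness, sub_self, and_self]
  exact hP.zero_mem_hatP

theorem IsCDTemp.pos {T : C(X, ℝ)} (hT : IsCDTemp P T) (x : X) : 0 < T x :=
  hT.choose_spec.1 x

theorem IsCDTemp.ne_zero {T : C(X, ℝ)} (hT : IsCDTemp P T) (x : X) : T x ≠ 0 :=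
  (hT.pos x).ne'

theorem IsCDTemp.exists_le {T : C(X, ℝ)} (hT : IsCDTemp P T) :
    ∃ η : C(X, ℝ), ∀ p ∈ P, p.2 (recip T hT.ne_zero) ≤ p.1 η :=
  ⟨hT.choose, hT.choose_spec.2 _ fun _ => rfl⟩

theorem isCDTemp_recip {β η : C(X, ℝ)} (hβ : ∀ x, 0 < β x) (h : ∀ p ∈ P, p.2 β ≤ p.1 η) :
    IsCDTemp P (recip β fun x => (hβ x).ne') :=
  ⟨η, fun x => inv_pos.2 (hβ x), fun β' hβ' => by
    convert h using 4
    ext x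
    simp [hβ']⟩

theorem IsCDTemp.apply_recip_eq_zero {T : C(X, ℝ)} (hT : IsCDTemp P T) {p : VSp X}
    (hp : p ∈ hatP P) (hnp : -p ∈ hatP P) (hp₁ : p.1 = 0) : p.2 (recip T hT.ne_zero) = 0 := by
  obtain ⟨η, hη⟩ := hT.exists_le
  have h₁ := snd_le_fst_of_mem_hatP hη p hp
  have h₂ := snd_le_fst_of_mem_hatP hη (-p) hnp
  simp only [Prod.fst_neg, Prod.snd_neg, hp₁, neg_zero, WeakDual.zero_apply,
    WeakDual.neg_apply] at h₁ h₂
  linarith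

variable [CompactSpace X] {T : C(X, ℝ)}

theorem IsCDTemp.eq_smul_recip_of_le (hT : IsCDTemp P T)
    (huniq : ∀ T' : C(X, ℝ), IsCDTemp P T' → ∃ α : ℝ, 0 < α ∧ T' = α • T) {g γ : C(X, ℝ)}
    (h : ∀ p ∈ P, p.2 γ ≤ p.1 g) : ∃ c : ℝ, γ = c • recip T hT.ne_zero := by
  obtain ⟨η, hη⟩ := hT.exists_le
  have hβ₀ : ∀ x, 0 < recip T hT.ne_zero x := fun x => inv_pos.2 (hT.pos x)
  obtain ⟨t, ht, hpos⟩ := exists_pos_forall_pos_add_mul hβ₀ γ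
  have hT' := isCDTemp_recip (β := recip T hT.ne_zero + t • γ) (η := η + t • g) hpos
    fun p hp => by
      simp only [map_add, map_smul, smul_eq_mul]
      nlinarith [hη p hp, h p hp]
  obtain ⟨α, hα, hαT⟩ := huniq _ hT'
  refine ⟨(α⁻¹ - 1) / t, ContinuousMap.ext fun x => ?_⟩
  have hx := congr($hαT x)
  simp only [recip_apply, ContinuousMap.add_apply, ContinuousMap.smul_apply, smul_eq_mul] at hx ⊢
  have hβ' : (T x)⁻¹ + t * γ x = α⁻¹ * (T x)⁻¹ := by rw [← mul_inv, ← hx, inv_inv]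
  rw [div_mul_eq_mul_div, eq_div_iff ht.ne']
  linarith

theorem mem_hatP_of_apply_recip_eq_zero (hP : IsKelvinPlanck P) (hT : IsCDTemp P T)
    (huniq : ∀ T' : C(X, ℝ), IsCDTemp P T' → ∃ α : ℝ, 0 < α ∧ T' = α • T) {q : Meas X}
    (hq : q (recip T hT.ne_zero) = 0) : ((0 : Meas X), q) ∈ hatP P := by
  by_contra hnotMem
  obtain ⟨f, hf, hfq⟩ := ProperCone.hyperplane_separation_point hP.hatPCone hnotMem
  obtain ⟨g, γ, hfgγ⟩ := WeakDual.exists_eval_eq_prod f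
  obtain ⟨c, hc⟩ := hT.eq_smul_recip_of_le huniq (g := g) (γ := -γ) fun p hp => by
    have := hf p (subset_hatP hp)
    rw [hfgγ] at this
    simp only [map_neg]
    linarith
  rw [hfgγ, neg_eq_iff_eq_neg.1 hc] at hfq
  simp [hq] at hfq

theorem isCarnotBetween_smul_dirac (hP : IsKelvinPlanck P) (hT : IsCDTemp P T)
    (huniq : ∀ T' : C(X, ℝ), IsCDTemp P T' → ∃ α : ℝ, 0 < α ∧ T' = α • T) (a b : X) :
    IsCarnotBetween P (hotnessLevel P a) (hotnessLevel P b)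
      ((0 : Meas X), T a • dirac a - T b • dirac b) := by
  have hcyclic (x y : X) : ((0 : Meas X), T x • dirac x - T y • dirac y) ∈ hatP P :=
    mem_hatP_of_apply_recip_eq_zero hP hT huniq (by simp [hT.ne_zero])
  refine ⟨hcyclic a b, ?_, _, _, smul_dirac_mem_posMeas (hT.pos a).le a,
    smul_dirac_mem_posMeas (hT.pos b).le b, smul_dirac_ne_zero (hT.ne_zero a) a,
    smul_dirac_ne_zero (hT.ne_zero b) b, suppIn_smul_dirac _ (hP.mem_hotnessLevel_self a),
    suppIn_smul_dirac _ (hP.mem_hotnessLevel_self b), rfl⟩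
  simpa using hcyclic b a

end Thermodynamics

theorem carnot_combinations_dense_in_reversible_cyclic_general
    {X : Type*} [TopologicalSpace X] [CompactSpace X]
    (P : Set (VSp X)) (hP : IsKelvinPlanck P)
    (T : C(X, ℝ)) (hT : IsCDTemp P T)
    (huniq : ∀ T' : C(X, ℝ), IsCDTemp P T' → ∃ α : ℝ, 0 < α ∧ T' = α • T) :
    {p : VSp X | p ∈ hatP P ∧ -p ∈ hatP P ∧ p.1 = 0} ⊆
      closure (Submodule.span ℝ {p : VSp X | ∃ a b : X,
        IsCarnotBetween P (hotnessLevel P a) (hotnessLevel P b) p} : Set (VSp X)) := by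
  rintro p ⟨hp, hnp, hp₁⟩
  by_contra hnotMem
  obtain ⟨f, hf, hfp⟩ := Submodule.exists_dual_eq_zero_of_notMem_closure _ hnotMem
  obtain ⟨g, γ, hfgγ⟩ := WeakDual.exists_eval_eq_prod f
  have hγ (a b : X) : T a * γ a = T b * γ b := by
    have := hf _ (Submodule.subset_span ⟨a, b, isCarnotBetween_smul_dirac hP hT huniq a b⟩)
    simp only [hfgγ, WeakDual.zero_apply, WeakDual.sub_apply, WeakDual.smul_apply,
      dirac_apply, zero_add] at this
    linarith
  obtain ⟨c, rfl⟩ := eq_smul_recip_of_forall_mul_eq hT.ne_zero hγ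
  simp [hfgγ, hp₁, hT.apply_recip_eq_zero hp hnp hp₁] at hfp

/-- **Corollary (Approximating reversible cyclic elements by combinations of Carnot
elements).** Let `(X, P)` be a Kelvin–Planck theory all of whose Clausius–Duhem
temperature scales are positive multiples of a fixed one.  Then the set of linear
combinations of Carnot elements of `(X, P)` is dense in the set of reversible
cyclic elements of `(X, P)`. -/
theorem carnot_combinations_dense_in_reversible_cyclic
    {X : Type*} [TopologicalSpace X] [CompactSpace X] [T2Space X]
    (P : Set (VSp X)) (hP : IsKelvinPlanck P)
    (T : C(X, ℝ)) (hT : IsCDTemp P T)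
    (huniq : ∀ T' : C(X, ℝ), IsCDTemp P T' → ∃ α : ℝ, 0 < α ∧ T' = α • T) :
    {p : VSp X | p ∈ hatP P ∧ -p ∈ hatP P ∧ p.1 = 0} ⊆
      closure (Submodule.span ℝ {p : VSp X | ∃ a b : X,
        IsCarnotBetween P (hotnessLevel P a) (hotnessLevel P b) p} : Set (VSp X)) :=
  carnot_combinations_dense_in_reversible_cyclic_general P hP T hT huniq
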